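/- For n ≥ 4, the vertex set of the standard n-cube {−1,1}^n ⊂ ℝ^n is not 4-point homogeneous: there exist two quadruples of vertices with equal corresponding pairwise Euclidean distances such that no distance-preserving bijection of {−1,1}^n onto itself maps the first quadruple onto the second pointwise. Specifically, for n = 4, the quadruples ((1,1,1,1),(−1,−1,1,1),(−1,1,−1,1),(−1,1,1,−1)) and ((1,1,1,1),(−1,−1,1,1),(−1,1,−1,1),(1,−1,−1,1)) have this property. -/

import Mathlib

/-- The vertex set of the standard `n`-cube `{−1,1}ⁿ`. -/
def cubeVertices (n : ℕ) : Set (EuclideanSpace ℝ (Fin n)) :=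
  {x | ∀ i, x i = 1 ∨ x i = -1}

/-- The first quadruple: `(1,…,1)`, and for `k = 1,2,3` the vertex with `−1`
in coordinates `0` and `k` and `1` elsewhere. -/
def quadA (n : ℕ) : Fin 4 → EuclideanSpace ℝ (Fin n) := fun k =>
  (WithLp.toLp 2 (fun i : Fin n => if k ≠ 0 ∧ ((i : ℕ) = 0 ∨ (i : ℕ) = (k : ℕ)) then (-1 : ℝ) else 1) :
    EuclideanSpace ℝ (Fin n))

/-- The second quadruple: same first three vertices, and last vertex
`(1,−1,−1,1,1,…,1)`. -/
def quadB (n : ℕ) : Fin 4 → EuclideanSpace ℝ (Fin n) := fun k =>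
  if k = 3 then
    (WithLp.toLp 2 (fun i : Fin n => if (i : ℕ) = 1 ∨ (i : ℕ) = 2 then (-1 : ℝ) else 1) : EuclideanSpace ℝ (Fin n))
  else quadA n k

/-!
Both quadruples are regular tetrahedra of side `2√2`. The vertex `(−1,1,…,1)` is adjacent
(at distance `2`) to all four points of the first one, so an isometry would produce a vertex
adjacent to all four points of the second one. But in each of the coordinates `0, 1, 2` the
second quadruple takes the value `1` twice and `−1` twice, so for every vertex `w` the squared
distances from `w` to its four points sum to at least `3 · 8 = 24 > 4 · 2²`.
-/

open Finset

-- Vertices given by `ℕ`-indexed sign sequences that are eventually `1`: their distances are then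
-- finite sums over `range 4`, independent of `n`.
def ofSeq (n : ℕ) (u : ℕ → ℝ) : EuclideanSpace ℝ (Fin n) :=
  WithLp.toLp 2 fun i => u i

@[simp]
lemma ofSeq_apply (n : ℕ) (u : ℕ → ℝ) (i : Fin n) : ofSeq n u i = u i := rfl

lemma ofSeq_mem_cubeVertices {n : ℕ} {u : ℕ → ℝ} (hu : ∀ j, u j = 1 ∨ u j = -1) :
    ofSeq n u ∈ cubeVertices n :=
  fun i => hu i

lemma dist_sq_eq_sum {n : ℕ} (x y : EuclideanSpace ℝ (Fin n)) :
    dist x y ^ 2 = ∑ i, (x i - y i) ^ 2 := by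
  rw [EuclideanSpace.dist_eq, Real.sq_sqrt (by positivity)]
  simp_rw [Real.dist_eq, sq_abs]

lemma dist_ofSeq_sq {n m : ℕ} (hmn : m ≤ n) {u v : ℕ → ℝ} (huv : ∀ j ≥ m, u j = v j) :
    dist (ofSeq n u) (ofSeq n v) ^ 2 = ∑ j ∈ range m, (u j - v j) ^ 2 := by
  simp_rw [dist_sq_eq_sum, ofSeq_apply]
  rw [Fin.sum_univ_eq_sum_range (fun j => (u j - v j) ^ 2)]
  exact eventually_constant_sum (fun j hj => by simp [huv j hj]) hmn

def quadASeq (k : Fin 4) (j : ℕ) : ℝ := if k ≠ 0 ∧ (j = 0 ∨ j = k) then -1 else 1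

def quadBSeq (k : Fin 4) (j : ℕ) : ℝ :=
  if k = 3 then (if j = 1 ∨ j = 2 then -1 else 1) else quadASeq k j

def quadACenterSeq (j : ℕ) : ℝ := if j = 0 then -1 else 1

lemma quadA_eq_ofSeq (n : ℕ) (k : Fin 4) : quadA n k = ofSeq n (quadASeq k) := rfl

lemma quadB_eq_ofSeq (n : ℕ) (k : Fin 4) : quadB n k = ofSeq n (quadBSeq k) := by
  unfold quadB quadBSeq
  split_ifs <;> rfl

lemma quadASeq_of_four_le {k : Fin 4} {j : ℕ} (hj : 4 ≤ j) : quadASeq k j = 1 :=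
  if_neg fun h => by omega

lemma quadBSeq_of_four_le {k : Fin 4} {j : ℕ} (hj : 4 ≤ j) : quadBSeq k j = 1 := by
  unfold quadBSeq
  split_ifs
  · omega
  · rfl
  · exact quadASeq_of_four_le hj

lemma dist_quadA_sq {n : ℕ} (hn : 4 ≤ n) (k l : Fin 4) :
    dist (quadA n k) (quadA n l) ^ 2 = if k = l then 0 else 8 := by
  rw [quadA_eq_ofSeq, quadA_eq_ofSeq, dist_ofSeq_sq hn]
  · fin_cases k <;> fin_cases l <;> simp [sum_range_succ, quadASeq] <;> norm_num
  · intro j hj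
    rw [quadASeq_of_four_le hj, quadASeq_of_four_le hj]

lemma dist_quadB_sq {n : ℕ} (hn : 4 ≤ n) (k l : Fin 4) :
    dist (quadB n k) (quadB n l) ^ 2 = if k = l then 0 else 8 := by
  rw [quadB_eq_ofSeq, quadB_eq_ofSeq, dist_ofSeq_sq hn]
  · fin_cases k <;> fin_cases l <;> simp [sum_range_succ, quadBSeq, quadASeq] <;> norm_num
  · intro j hj
    rw [quadBSeq_of_four_le hj, quadBSeq_of_four_le hj]

lemma dist_quadACenter_quadA_sq {n : ℕ} (hn : 4 ≤ n) (k : Fin 4) :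
    dist (ofSeq n quadACenterSeq) (quadA n k) ^ 2 = 4 := by
  rw [quadA_eq_ofSeq, dist_ofSeq_sq hn]
  · fin_cases k <;> simp [sum_range_succ, quadASeq, quadACenterSeq] <;> norm_num
  · intro j hj
    rw [quadASeq_of_four_le hj, quadACenterSeq, if_neg (by omega)]

lemma sum_sq_sub_quadBSeq {s : ℝ} (hs : s = 1 ∨ s = -1) {j : ℕ} (hj : j < 3) :
    ∑ k, (s - quadBSeq k j) ^ 2 = 8 := by
  interval_cases j <;> rcases hs with rfl | rfl <;>
    simp [Fin.sum_univ_four, quadBSeq, quadASeq] <;> norm_num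

lemma le_sum_dist_quadB_sq {n : ℕ} (hn : 3 ≤ n) {w : EuclideanSpace ℝ (Fin n)}
    (hw : w ∈ cubeVertices n) : 24 ≤ ∑ k, dist w (quadB n k) ^ 2 := by
  simp_rw [dist_sq_eq_sum, quadB_eq_ofSeq, ofSeq_apply]
  rw [sum_comm]
  calc (24 : ℝ) = ∑ i ∈ ({i : Fin n | (i : ℕ) < 3} : Finset _), ∑ k, (w i - quadBSeq k i) ^ 2 := by
        rw [sum_congr rfl fun i hi => sum_sq_sub_quadBSeq (hw i) (mem_filter.1 hi).2,
          sum_const, Fin.card_filter_val_lt, min_eq_right hn]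
        norm_num
    _ ≤ _ := sum_le_sum_of_subset_of_nonneg (filter_subset _ _) fun _ _ _ => by positivity

/-- For `n ≥ 4`, the vertex set of the `n`-cube is not 4-point homogeneous:
the two displayed quadruples have equal corresponding pairwise distances, but
no self-isometry of the vertex set maps one onto the other pointwise. -/
theorem stmt10 (n : ℕ) (hn : 4 ≤ n) :
    (∀ k l, dist (quadA n k) (quadA n l) = dist (quadB n k) (quadB n l)) ∧
    ¬∃ f : EuclideanSpace ℝ (Fin n) → EuclideanSpace ℝ (Fin n),
      Set.BijOn f (cubeVertices n) (cubeVertices n) ∧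
      (∀ x ∈ cubeVertices n, ∀ y ∈ cubeVertices n, dist (f x) (f y) = dist x y) ∧
      ∀ k, f (quadA n k) = quadB n k := by
  refine ⟨fun k l => ?_, ?_⟩
  · rw [← pow_left_inj₀ dist_nonneg dist_nonneg two_ne_zero, dist_quadA_sq hn, dist_quadB_sq hn]
  · rintro ⟨f, hbij, hiso, hmap⟩
    set c := ofSeq n quadACenterSeq
    have hc : c ∈ cubeVertices n :=
      ofSeq_mem_cubeVertices fun j => by unfold quadACenterSeq; split_ifs <;> simp
    have hA : ∀ k, quadA n k ∈ cubeVertices n := fun k => quadA_eq_ofSeq n k ▸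
      ofSeq_mem_cubeVertices fun j => by unfold quadASeq; split_ifs <;> simp
    have hfc : ∀ k, dist (f c) (quadB n k) ^ 2 = 4 := fun k => by
      rw [← hmap k, hiso c hc _ (hA k), dist_quadACenter_quadA_sq hn]
    have h24 := le_sum_dist_quadB_sq (by omega) (hbij.mapsTo hc)
    norm_num [hfc] at h24
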